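/- P-transitivity is equivalent to a local condition: a graph (V, R) with coloring P is P-transitive if and only if for all vertices x, y with P x = P y, whenever there is a path of length 2 or of length 3 from x to y, we have R x y. -/

import Mathlib

/-!
A path of length `n ≥ 4` from `x` to `y` starts `x → x₁` and ends `w → y`. Among the three
colours `P x = P y`, `P x₁`, `P w` two agree, and the corresponding subpath (`x₁ ⇝ y`, `x ⇝ w`
or `x₁ ⇝ w`) is strictly shorter, so by induction it collapses to a single edge. This leaves a
path of length 2 or 3 from `x` to `y`, which the local condition collapses to `R x y`.
-/

def PathLen {V : Type*} (R : V → V → Prop) : ℕ → V → V → Prop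
  | 0, x, y => x = y
  | n+1, x, y => ∃ z, R x z ∧ PathLen R n z y

def Reaches {V : Type*} (R : V → V → Prop) (x y : V) : Prop :=
  ∃ n, 1 ≤ n ∧ PathLen R n x y

def PTrans {V : Type*} (P : V → Bool) (R : V → V → Prop) : Prop :=
  ∀ x y, P x = P y → Reaches R x y → R x y

def PTC {V : Type*} (P : V → Bool) (R : V → V → Prop) (x y : V) : Prop :=
  R x y ∨ (P x = P y ∧ Reaches R x y)

theorem Bool.eq_or_eq_or_eq (a b c : Bool) : a = b ∨ a = c ∨ b = c := by
  revert a b c; decide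

namespace PathLen

variable {V : Type*} {R : V → V → Prop}

theorem one_iff {x y : V} : PathLen R 1 x y ↔ R x y := by
  simp [PathLen]

theorem two_of_rel {x z y : V} (hxz : R x z) (hzy : R z y) : PathLen R 2 x y :=
  ⟨z, hxz, y, hzy, rfl⟩

theorem three_of_rel {x z w y : V} (hxz : R x z) (hzw : R z w) (hwy : R w y) :
    PathLen R 3 x y :=
  ⟨z, hxz, w, hzw, y, hwy, rfl⟩

theorem exists_snoc : ∀ {n : ℕ} {x y : V}, PathLen R (n + 1) x y → ∃ w, PathLen R n x w ∧ R w y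
  | 0, x, _, ⟨_, hxz, rfl⟩ => ⟨x, rfl, hxz⟩
  | _ + 1, _, _, ⟨z, hxz, hzy⟩ =>
    let ⟨w, hzw, hwy⟩ := exists_snoc hzy
    ⟨w, ⟨z, hxz, hzw⟩, hwy⟩

end PathLen

section LocalCondition

variable {V : Type*} {R : V → V → Prop} {P : V → Bool}

theorem rel_of_pathLen_add_four
    (hloc : ∀ x y : V, P x = P y → (PathLen R 2 x y ∨ PathLen R 3 x y) → R x y) {m : ℕ}
    (ih : ∀ k < m + 4, ∀ x y, P x = P y → 1 ≤ k → PathLen R k x y → R x y)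
    {x y : V} (hxy : P x = P y) (hpath : PathLen R (m + 4) x y) : R x y := by
  obtain ⟨x₁, hxx₁, hx₁y⟩ := hpath
  obtain ⟨w, hx₁w, hwy⟩ := PathLen.exists_snoc hx₁y
  rcases Bool.eq_or_eq_or_eq (P x) (P x₁) (P w) with h | h | h
  · have hx₁y' : R x₁ y := ih (m + 3) (by omega) x₁ y (h.symm.trans hxy) (by omega) hx₁y
    exact hloc x y hxy (.inl (PathLen.two_of_rel hxx₁ hx₁y'))
  · have hxw : R x w := ih (m + 3) (by omega) x w h (by omega) ⟨x₁, hxx₁, hx₁w⟩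
    exact hloc x y hxy (.inl (PathLen.two_of_rel hxw hwy))
  · have hx₁w' : R x₁ w := ih (m + 2) (by omega) x₁ w h (by omega) hx₁w
    exact hloc x y hxy (.inr (PathLen.three_of_rel hxx₁ hx₁w' hwy))

theorem rel_of_pathLen
    (hloc : ∀ x y : V, P x = P y → (PathLen R 2 x y ∨ PathLen R 3 x y) → R x y) (n : ℕ) :
    ∀ x y, P x = P y → 1 ≤ n → PathLen R n x y → R x y := by
  induction n using Nat.strong_induction_on with
  | _ n ih =>
    intro x y hxy hn hpath
    match n, hn with
    | 1, _ => exact PathLen.one_iff.mp hpath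
    | 2, _ => exact hloc x y hxy (.inl hpath)
    | 3, _ => exact hloc x y hxy (.inr hpath)
    | m + 4, _ => exact rel_of_pathLen_add_four hloc ih hxy hpath

end LocalCondition

theorem ptransitive_iff_local {V : Type*} (R : V → V → Prop) (P : V → Bool) :
    PTrans P R ↔
      ∀ x y : V, P x = P y → (PathLen R 2 x y ∨ PathLen R 3 x y) → R x y := by
  constructor
  · rintro h x y hxy (h2 | h3)
    · exact h x y hxy ⟨2, by norm_num, h2⟩
    · exact h x y hxy ⟨3, by norm_num, h3⟩
  · rintro hloc x y hxy ⟨n, hn, hpath⟩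
    exact rel_of_pathLen hloc n x y hxy hn hpath
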